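/- (Proposition 4.3, necessity) Let r ∈ S∧S be skew-symmetric such that the coboundary cocommutator δ_r is a Lie bialgebra cocommutator, and suppose there are reals α, ξ, ν, β1, β2, β3, β4, β5, β6 with δ_r(K) = β6 K∧P + ξ K∧M + ν P∧H + β1 P∧M + β2 H∧M, δ_r(H) = β5 K∧M - (β6+α) P∧H + β3 P∧M + (β4-ξ) H∧M, δ_r(P) = β4 P∧M + (β6+α) H∧M, and δ_r(M) = α P∧M (the general extended Galilei cocommutator on span{K,H,P,M}). Then α = ν = β5 = β6 = 0 and β2*(2β4 - ξ) = 0. -/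

import Mathlib

open TensorProduct

noncomputable section

variable (L : Type) [LieRing L] [LieAlgebra ℝ L]

/-- The wedge X∧Y = X⊗Y - Y⊗X in S⊗S. -/
def wedge (X Y : L) : L ⊗[ℝ] L := X ⊗ₜ[ℝ] Y - Y ⊗ₜ[ℝ] X

/-- The adjoint action of X on S⊗S: X·r = (ad_X⊗id + id⊗ad_X)(r). -/
def act (X : L) : (L ⊗[ℝ] L) →ₗ[ℝ] (L ⊗[ℝ] L) :=
  LinearMap.rTensor L (LieAlgebra.ad ℝ L X) + LinearMap.lTensor L (LieAlgebra.ad ℝ L X)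

/-- S∧S: the span of wedges, i.e. the skew-symmetric part of S⊗S. -/
def skewPart : Submodule ℝ (L ⊗[ℝ] L) :=
  Submodule.span ℝ {w | ∃ X Y : L, w = wedge L X Y}

/-- 1-cocycle condition. -/
def IsCocycle (δ : L → L ⊗[ℝ] L) : Prop :=
  ∀ X Y : L, δ ⁅X, Y⁆ = act L X (δ Y) - act L Y (δ X)

/-- The coboundary cocommutator δ_r(X) = X·r, as a linear map. -/
def cobdry (r : L ⊗[ℝ] L) : L →ₗ[ℝ] L ⊗[ℝ] L where
  toFun X := act L X r
  map_add' X Y := by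
    have h : LieAlgebra.ad ℝ L (X + Y) = LieAlgebra.ad ℝ L X + LieAlgebra.ad ℝ L Y :=
      map_add _ _ _
    simp only [act, h, LinearMap.rTensor_add, LinearMap.lTensor_add, LinearMap.add_apply]
    abel
  map_smul' c X := by
    have h : LieAlgebra.ad ℝ L (c • X) = c • LieAlgebra.ad ℝ L X := map_smul _ _ _
    simp only [act, h, LinearMap.rTensor_smul, LinearMap.lTensor_smul, LinearMap.add_apply,
      LinearMap.smul_apply, RingHom.id_apply, smul_add]

/-- The cyclic permutation ζ : x⊗y⊗z ↦ z⊗x⊗y on (S⊗S)⊗S. -/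
def zeta : ((L ⊗[ℝ] L) ⊗[ℝ] L) →ₗ[ℝ] ((L ⊗[ℝ] L) ⊗[ℝ] L) :=
  ((TensorProduct.assoc ℝ L L L).symm.toLinearMap).comp
    ((TensorProduct.comm ℝ (L ⊗[ℝ] L) L).toLinearMap)

/-- The co-Jacobi identity for a linear map δ : S → S⊗S. -/
def CoJacobi (δ : L →ₗ[ℝ] L ⊗[ℝ] L) : Prop :=
  ∀ X : L,
    ((LinearMap.id : ((L ⊗[ℝ] L) ⊗[ℝ] L) →ₗ[ℝ] ((L ⊗[ℝ] L) ⊗[ℝ] L)) + zeta L +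
      zeta L ∘ₗ zeta L) (LinearMap.rTensor L δ (δ X)) = 0

/-- A Lie bialgebra cocommutator: skew-symmetric-valued 1-cocycle satisfying co-Jacobi. -/
def IsBialgCocomm (δ : L →ₗ[ℝ] L ⊗[ℝ] L) : Prop :=
  (∀ X : L, δ X ∈ skewPart L) ∧ IsCocycle L ⇑δ ∧ CoJacobi L δ

/-- The general 15-parameter skew-symmetric element r(a,b,c) of S⊗S. -/
def rGen (D H P K C M : L) (a1 a2 a3 a4 a5 a6 b1 b2 b3 b4 b5 b6 c1 c2 c3 : ℝ) :
    L ⊗[ℝ] L :=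
  a1 • wedge L D P + a2 • wedge L D H + a3 • wedge L P M + a4 • wedge L H M +
    a5 • wedge L P H + a6 • wedge L P C + b1 • wedge L D K + b2 • wedge L D C +
    b3 • wedge L K M + b4 • wedge L C M + b5 • wedge L K C + b6 • wedge L K H +
    c1 • wedge L D M + c2 • wedge L P K + c3 • wedge L H C

/-- The 19 Schrödinger bialgebra equations. -/
def Eqs19 (a1 a2 a3 a4 a5 a6 b1 b2 b3 b4 b5 b6 c1 c2 c3 : ℝ) : Prop :=
  a6^2 + a6*b1 - 3*a1*b5 + b5*b6 = 0 ∧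
  a2*a3 - 2*a1*a4 - a4*b6 - 3*a5*c1 + a5*c2 = 0 ∧
  a1*a2 + a2*b6 - a5*c3 = 0 ∧
  a5*b1 - a1*b6 - 2*a2*c1 - a4*c3 = 0 ∧
  a4*a6 + a4*b1 - a2*b3 - a5*b4 + a1*c1 - a1*c2 = 0 ∧
  3*a1*b2 - a2*b5 + a6*c3 + b1*c3 = 0 ∧
  a3*b2 + 2*a1*b4 - a4*b5 + a6*c1 + a6*c2 + b3*c3 = 0 ∧
  3*a2*b5 + b2*b6 - a6*c3 = 0 ∧
  b6^2 + b6*a1 - 3*b1*a5 + a5*a6 = 0 ∧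
  b2*b3 - 2*b1*b4 - b4*a6 - 3*b5*c1 - b5*c2 = 0 ∧
  b1*b2 + b2*a6 + b5*c3 = 0 ∧
  b5*a1 - b1*a6 - 2*b2*c1 + b4*c3 = 0 ∧
  b4*b6 + b4*a1 - b2*a3 - b5*a4 + b1*c1 + b1*c2 = 0 ∧
  3*b1*a2 - b2*a5 - b6*c3 - a1*c3 = 0 ∧
  b3*a2 + 2*b1*a4 - b4*a5 + b6*c1 - b6*c2 - a3*c3 = 0 ∧
  3*b2*a5 + a2*a6 + b6*c3 = 0 ∧
  4*a2*b2 + c3^2 = 0 ∧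
  2*a4*b2 + 2*a2*b4 + a5*b5 - a6*b6 = 0 ∧
  2*a1*b1 - a1*a6 - b1*b6 + a5*b5 - a6*b6 = 0

/-- Full antisymmetrization X∧Y∧Z in (S⊗S)⊗S. -/
def wedge3 (X Y Z : L) : (L ⊗[ℝ] L) ⊗[ℝ] L :=
  (X ⊗ₜ[ℝ] Y) ⊗ₜ[ℝ] Z - (X ⊗ₜ[ℝ] Z) ⊗ₜ[ℝ] Y - (Y ⊗ₜ[ℝ] X) ⊗ₜ[ℝ] Z +
    (Y ⊗ₜ[ℝ] Z) ⊗ₜ[ℝ] X + (Z ⊗ₜ[ℝ] X) ⊗ₜ[ℝ] Y - (Z ⊗ₜ[ℝ] Y) ⊗ₜ[ℝ] X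

/-- The Schouten bracket [[r,r]], written in coordinates w.r.t. a basis. -/
def schouten (B : Module.Basis (Fin 6) ℝ L) (r : L ⊗[ℝ] L) : (L ⊗[ℝ] L) ⊗[ℝ] L :=
  ∑ i : Fin 6, ∑ j : Fin 6, ∑ k : Fin 6, ∑ l : Fin 6,
    (((B.tensorProduct B).repr r (i, j)) * ((B.tensorProduct B).repr r (k, l))) •
      ((⁅B i, B k⁆ ⊗ₜ[ℝ] B j) ⊗ₜ[ℝ] B l + (B i ⊗ₜ[ℝ] ⁅B j, B k⁆) ⊗ₜ[ℝ] B l +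
        (B i ⊗ₜ[ℝ] B k) ⊗ₜ[ℝ] ⁅B j, B l⁆)

/-- The adjoint-invariant elements of S⊗S. -/
def invariants : Submodule ℝ (L ⊗[ℝ] L) where
  carrier := {η | ∀ X : L, act L X η = 0}
  add_mem' := by
    intro a b ha hb X
    simp [map_add, ha X, hb X]
  zero_mem' := by intro X; simp
  smul_mem' := by
    intro c a ha X
    simp [map_smul, ha X]

/-- The space of skew-symmetric-valued 1-cocycles on S. -/
def cocycleSpace : Submodule ℝ (L →ₗ[ℝ] (L ⊗[ℝ] L)) where
  carrier := {δ | (∀ X : L, δ X ∈ skewPart L) ∧ IsCocycle L ⇑δ}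
  add_mem' := by
    rintro a b ⟨ha1, ha2⟩ ⟨hb1, hb2⟩
    refine ⟨fun X => add_mem (ha1 X) (hb1 X), fun X Y => ?_⟩
    simp only [LinearMap.add_apply, ha2 X Y, hb2 X Y, map_add]
    abel
  zero_mem' := by
    refine ⟨fun X => zero_mem _, fun X Y => ?_⟩
    simp
  smul_mem' := by
    rintro c a ⟨ha1, ha2⟩
    refine ⟨fun X => Submodule.smul_mem _ c (ha1 X), fun X Y => ?_⟩
    simp only [LinearMap.smul_apply, ha2 X Y, map_smul, smul_sub]

end

/-!
Write `r = r(a,b,c)` (`rGen`) in the basis. The prescribed `δ_r(K)` and `δ_r(H)` are linear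
conditions on the fifteen coordinates: they force `α = ν = β₅ = 0` and cut `r` down to seven
parameters, from which `δ_r(C)` and `δ_r(D)` are computed. Since `M` is central, `δ_r(M) = 0`.
The `H ⊗ K ⊗ M` coordinate of the co-Jacobi identity at `K` is `β₆ (β₆ + α) = 0`, and its
`D ⊗ P ⊗ M` coordinate at `C` is `β₂ (2β₄ - ξ) = β₁ β₆`.
-/

section Coordinates

variable {ι R M : Type*} [CommRing R] [AddCommGroup M] [Module R M]

noncomputable def tensorCoord (b : Module.Basis ι R M) (i j : ι) : M ⊗[R] M →ₗ[R] R :=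
  (b.tensorProduct b).coord (i, j)

noncomputable def tensorCoord₃ (b : Module.Basis ι R M) (i j k : ι) : (M ⊗[R] M) ⊗[R] M →ₗ[R] R :=
  ((b.tensorProduct b).tensorProduct b).coord ((i, j), k)

@[simp]
theorem tensorCoord_tmul (b : Module.Basis ι R M) (i j : ι) (x y : M) :
    tensorCoord b i j (x ⊗ₜ y) = b.repr x i * b.repr y j := by
  simp [tensorCoord, mul_comm]

@[simp]
theorem tensorCoord₃_tmul (b : Module.Basis ι R M) (i j k : ι) (t : M ⊗[R] M) (z : M) :
    tensorCoord₃ b i j k (t ⊗ₜ z) = tensorCoord b i j t * b.repr z k := by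
  simp [tensorCoord₃, tensorCoord, mul_comm]

theorem sum_tensorCoord_smul_tmul [Fintype ι] (b : Module.Basis ι R M) (t : M ⊗[R] M) :
    ∑ i, ∑ j, tensorCoord b i j t • (b i ⊗ₜ[R] b j) = t := by
  conv_rhs => rw [← (b.tensorProduct b).sum_repr t]
  rw [Fintype.sum_prod_type]
  simp [tensorCoord, Module.Basis.tensorProduct_apply]

end Coordinates

section LieBialgebra

variable {L : Type} [LieRing L] [LieAlgebra ℝ L]

@[simp]
theorem tensorCoord_wedge {ι : Type*} (b : Module.Basis ι ℝ L) (i j : ι) (x y : L) :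
    tensorCoord b i j (wedge L x y) = b.repr x i * b.repr y j - b.repr y i * b.repr x j := by
  simp [wedge]

theorem tensorCoord_swap_of_mem_skewPart {ι : Type*} (b : Module.Basis ι ℝ L) {r : L ⊗[ℝ] L}
    (hr : r ∈ skewPart L) (i j : ι) : tensorCoord b j i r = -tensorCoord b i j r := by
  induction hr using Submodule.span_induction with
  | mem w hw =>
    obtain ⟨x, y, rfl⟩ := hw
    simp only [tensorCoord_wedge]; ring
  | zero => simp
  | add x y _ _ hx hy => simp only [map_add, hx, hy]; ring
  | smul a x _ hx => simp only [map_smul, hx, smul_neg]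

@[simp]
theorem act_tmul (X x y : L) : act L X (x ⊗ₜ[ℝ] y) = ⁅X, x⁆ ⊗ₜ y + x ⊗ₜ ⁅X, y⁆ := by
  simp [act]

theorem act_wedge (X x y : L) :
    act L X (wedge L x y) = wedge L ⁅X, x⁆ y + wedge L x ⁅X, y⁆ := by
  simp only [wedge, map_sub, act_tmul]; abel

theorem cobdry_apply (r : L ⊗[ℝ] L) (X : L) : cobdry L r X = act L X r := rfl

theorem cobdry_eq_zero_of_forall_lie_eq_zero (r : L ⊗[ℝ] L) {Z : L} (hZ : ∀ X : L, ⁅Z, X⁆ = 0) :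
    cobdry L r Z = 0 := by
  have : LieAlgebra.ad ℝ L Z = 0 := LinearMap.ext hZ
  simp [cobdry_apply, act, this]

theorem tensorCoord₃_zeta {ι : Type*} (b : Module.Basis ι ℝ L) (i j k : ι)
    (t : (L ⊗[ℝ] L) ⊗[ℝ] L) :
    tensorCoord₃ b i j k (zeta L t) = tensorCoord₃ b j k i t := by
  induction t using TensorProduct.induction_on with
  | zero => simp
  | add x y hx hy => simp [hx, hy]
  | tmul u z =>
    induction u using TensorProduct.induction_on with
    | zero => simp
    | add x y hx hy => simp [add_tmul, hx, hy]
    | tmul x y =>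
      simp only [zeta, LinearEquiv.comp_coe, LinearEquiv.coe_coe, LinearEquiv.trans_apply,
        comm_tmul, assoc_symm_tmul, tensorCoord₃_tmul, tensorCoord_tmul]
      ring

theorem tensorCoord₃_rTensor_wedge {ι : Type*} (b : Module.Basis ι ℝ L) (i j k : ι)
    (δ : L →ₗ[ℝ] L ⊗[ℝ] L) (x y : L) :
    tensorCoord₃ b i j k (LinearMap.rTensor L δ (wedge L x y)) =
      tensorCoord b i j (δ x) * b.repr y k - tensorCoord b i j (δ y) * b.repr x k := by
  simp [wedge]

section Schrodinger

variable {D H P K C M : L} {B : Module.Basis (Fin 6) ℝ L}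

theorem repr_letters (hB : ⇑B = ![D, H, P, K, C, M]) :
    B.repr D = Finsupp.single 0 1 ∧ B.repr H = Finsupp.single 1 1 ∧
      B.repr P = Finsupp.single 2 1 ∧ B.repr K = Finsupp.single 3 1 ∧
      B.repr C = Finsupp.single 4 1 ∧ B.repr M = Finsupp.single 5 1 := by
  refine ⟨?_, ?_, ?_, ?_, ?_, ?_⟩ <;>
  · rw [← B.repr_self]; simp [hB]

theorem exists_eq_rGen (hB : ⇑B = ![D, H, P, K, C, M]) {r : L ⊗[ℝ] L} (hr : r ∈ skewPart L) :
    ∃ a1 a2 a3 a4 a5 a6 b1 b2 b3 b4 b5 b6 c1 c2 c3 : ℝ,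
      r = rGen L D H P K C M a1 a2 a3 a4 a5 a6 b1 b2 b3 b4 b5 b6 c1 c2 c3 := by
  let c := fun i j => tensorCoord B i j r
  have hswap : ∀ i j, i < j → tensorCoord B j i r = -c i j := fun i j _ =>
    tensorCoord_swap_of_mem_skewPart B hr i j
  have hdiag : ∀ i, tensorCoord B i i r = 0 := fun i => by
    linarith [tensorCoord_swap_of_mem_skewPart B hr i i]
  -- the coordinates of `r` at the wedges of `rGen`; `P ∧ H` and `K ∧ H` run against the basis order
  refine ⟨c 0 2, c 0 1, c 2 5, c 1 5, -c 1 2, c 2 4, c 0 3, c 0 4, c 3 5, c 4 5, c 3 4, -c 1 3,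
    c 0 5, c 2 3, c 1 4, ?_⟩
  conv_lhs => rw [← sum_tensorCoord_smul_tmul B r]
  simp (disch := decide) only [Fin.sum_univ_six, hswap, hdiag]
  simp only [hB, Matrix.cons_val_zero, Matrix.cons_val_one, Matrix.cons_val, zero_smul, zero_add,
    add_zero, neg_smul, rGen, wedge]
  module

theorem eq_rGen_of_cobdry_K_H (hB : ⇑B = ![D, H, P, K, C, M])
    (hDK : ⁅D, K⁆ = K) (hKP : ⁅K, P⁆ = M) (hDH : ⁅D, H⁆ = (-2 : ℝ) • H) (hHC : ⁅H, C⁆ = D)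
    (hKH : ⁅K, H⁆ = P) (hKC : ⁅K, C⁆ = 0) (hPH : ⁅P, H⁆ = 0) (hM : ∀ X : L, ⁅M, X⁆ = 0)
    {r : L ⊗[ℝ] L} {a1 a2 a3 a4 a5 a6 b1 b2 b3 b4 b5 b6 c1 c2 c3 : ℝ}
    (hr : r = rGen L D H P K C M a1 a2 a3 a4 a5 a6 b1 b2 b3 b4 b5 b6 c1 c2 c3)
    {al xi nu be1 be2 be3 be4 be5 be6 : ℝ}
    (hdK : cobdry L r K = be6 • wedge L K P + xi • wedge L K M + nu • wedge L P H +
      be1 • wedge L P M + be2 • wedge L H M)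
    (hdH : cobdry L r H = be5 • wedge L K M - (be6 + al) • wedge L P H +
      be3 • wedge L P M + (be4 - xi) • wedge L H M) :
    al = 0 ∧ nu = 0 ∧ be5 = 0 ∧
      r = rGen L D H P K C M 0 0 a3 be1 (-be2) 0 0 0 (-be3) 0 0 be6 ((be4 - xi) / 2)
        (-((be4 + xi) / 2)) 0 := by
  obtain ⟨rD, rH, rP, rK, rC, rM⟩ := repr_letters hB
  have eK := fun i j => congrArg (tensorCoord B i j) hdK
  have eH := fun i j => congrArg (tensorCoord B i j) hdH
  -- `K_XY` is the `X ⊗ Y` coordinate of `K · r`, and `H_XY` that of `H · r`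
  have K_DM := eK 0 5; have K_DP := eK 0 2; have K_KP := eK 3 2; have K_PM := eK 2 5
  have K_HM := eK 1 5; have K_CM := eK 4 5; have K_KC := eK 3 4; have K_KM := eK 3 5
  have K_PC := eK 2 4; have K_PH := eK 2 1
  have H_KM := eH 3 5; have H_PH := eH 2 1; have H_PM := eH 2 5; have H_HM := eH 1 5
  have H_HK := eH 1 3; have H_DM := eH 0 5; have H_KD := eH 3 0
  simp only [hr, cobdry_apply, rGen, map_add, map_sub, map_smul, map_neg, map_zero, act_wedge,
    ← lie_skew K D, ← lie_skew K M, ← lie_skew H D, ← lie_skew H P, ← lie_skew H K,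
    ← lie_skew H M, hDK, hKP, hDH, hHC, hKH, hKC, hPH, hM, lie_self, neg_zero, tensorCoord_wedge,
    Finsupp.smul_apply, Finsupp.neg_apply, Finsupp.coe_zero, Pi.zero_apply, rD, rH, rP, rK, rC, rM,
    Finsupp.single_apply, Fin.reduceEq, if_true, if_false, smul_eq_mul]
    at K_DM K_DP K_KP K_PM K_HM K_CM K_KC K_KM K_PC K_PH H_KM H_PH H_PM H_HM H_HK H_DM H_KD
  refine ⟨by linarith, by linarith, by linarith, hr.trans ?_⟩
  congr <;> linarith

theorem cobdry_rGen_C (hDC : ⁅D, C⁆ = (2 : ℝ) • C) (hHC : ⁅H, C⁆ = D) (hPC : ⁅P, C⁆ = -K)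
    (hKC : ⁅K, C⁆ = 0) (hM : ∀ X : L, ⁅M, X⁆ = 0) (a3 a4 a5 b3 b6 c1 c2 : ℝ) :
    cobdry L (rGen L D H P K C M 0 0 a3 a4 a5 0 0 0 b3 0 0 b6 c1 c2 0) C =
      a3 • wedge L K M - a4 • wedge L D M + a5 • wedge L K H - a5 • wedge L P D -
        b6 • wedge L K D - (2 * c1) • wedge L C M := by
  simp only [cobdry_apply, rGen, map_add, map_smul, act_wedge, ← lie_skew C D, ← lie_skew C H,
    ← lie_skew C P, ← lie_skew C K, ← lie_skew C M, hDC, hHC, hPC, hKC, hM]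
  simp only [wedge, neg_tmul, tmul_neg, ← smul_tmul', tmul_smul, zero_tmul, tmul_zero, neg_zero]
  module

theorem cobdry_rGen_D (hDP : ⁅D, P⁆ = -P) (hDK : ⁅D, K⁆ = K) (hDH : ⁅D, H⁆ = (-2 : ℝ) • H)
    (hM : ∀ X : L, ⁅M, X⁆ = 0) (a3 a4 a5 b3 b6 c1 c2 : ℝ) :
    cobdry L (rGen L D H P K C M 0 0 a3 a4 a5 0 0 0 b3 0 0 b6 c1 c2 0) D =
      -a3 • wedge L P M - (2 * a4) • wedge L H M - (3 * a5) • wedge L P H +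
        b3 • wedge L K M - b6 • wedge L K H := by
  simp only [cobdry_apply, rGen, map_add, map_smul, act_wedge, ← lie_skew D M, hDP, hDK, hDH,
    hM, lie_self]
  simp only [wedge, neg_tmul, tmul_neg, ← smul_tmul', tmul_smul, zero_tmul, tmul_zero, neg_zero]
  module

theorem coJacobi_at_K (hB : ⇑B = ![D, H, P, K, C, M]) {δ : L →ₗ[ℝ] L ⊗[ℝ] L}
    (hcj : CoJacobi L δ) {al xi nu be1 be2 be3 be4 be5 be6 : ℝ}
    (hK : δ K = be6 • wedge L K P + xi • wedge L K M + nu • wedge L P H +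
      be1 • wedge L P M + be2 • wedge L H M)
    (hH : δ H = be5 • wedge L K M - (be6 + al) • wedge L P H +
      be3 • wedge L P M + (be4 - xi) • wedge L H M)
    (hP : δ P = be4 • wedge L P M + (be6 + al) • wedge L H M) (hM : δ M = 0) :
    be6 * (be6 + al) = 0 := by
  obtain ⟨-, rH, rP, rK, -, rM⟩ := repr_letters hB
  have h := congrArg (tensorCoord₃ B 1 3 5) (hcj K)
  simp only [hK, hH, hP, hM, map_add, map_sub, map_smul, map_zero, LinearMap.add_apply,
    LinearMap.id_apply, LinearMap.comp_apply, tensorCoord₃_zeta, tensorCoord₃_rTensor_wedge,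
    tensorCoord_wedge, rH, rP, rK, rM, Finsupp.single_apply, Fin.reduceEq, if_true,
    if_false, smul_eq_mul] at h
  linear_combination h

theorem coJacobi_at_C (hB : ⇑B = ![D, H, P, K, C, M]) {δ : L →ₗ[ℝ] L ⊗[ℝ] L}
    (hcj : CoJacobi L δ) {a3 al xi nu be1 be2 be3 be4 be5 be6 : ℝ}
    (hK : δ K = be6 • wedge L K P + xi • wedge L K M + nu • wedge L P H +
      be1 • wedge L P M + be2 • wedge L H M)
    (hH : δ H = be5 • wedge L K M - (be6 + al) • wedge L P H +
      be3 • wedge L P M + (be4 - xi) • wedge L H M)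
    (hP : δ P = be4 • wedge L P M + (be6 + al) • wedge L H M) (hM : δ M = 0)
    (hC : δ C = a3 • wedge L K M - be1 • wedge L D M - be2 • wedge L K H +
      be2 • wedge L P D - be6 • wedge L K D - (be4 - xi) • wedge L C M)
    (hD : δ D = -a3 • wedge L P M - (2 * be1) • wedge L H M + (3 * be2) • wedge L P H -
      be3 • wedge L K M - be6 • wedge L K H) :
    be2 * (2 * be4 - xi) = be1 * be6 := by
  obtain ⟨rD, rH, rP, rK, rC, rM⟩ := repr_letters hB
  have h := congrArg (tensorCoord₃ B 0 2 5) (hcj C)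
  simp only [hK, hH, hP, hM, hC, hD, map_add, map_sub, map_smul, map_zero,
    LinearMap.add_apply, LinearMap.id_apply, LinearMap.comp_apply, tensorCoord₃_zeta,
    tensorCoord₃_rTensor_wedge, tensorCoord_wedge, rD, rH, rP, rK, rC, rM, Finsupp.single_apply,
    Fin.reduceEq, if_true, if_false, smul_eq_mul] at h
  linear_combination h

end Schrodinger

end LieBialgebra

theorem statement15_general (L : Type) [LieRing L] [LieAlgebra ℝ L]
    (D H P K C M : L) (B : Module.Basis (Fin 6) ℝ L)
    (hB : ⇑B = ![D, H, P, K, C, M])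
    (hDP : ⁅D, P⁆ = -P) (hDK : ⁅D, K⁆ = K) (hKP : ⁅K, P⁆ = M)
    (hDH : ⁅D, H⁆ = (-2 : ℝ) • H) (hDC : ⁅D, C⁆ = (2 : ℝ) • C) (hHC : ⁅H, C⁆ = D)
    (hKH : ⁅K, H⁆ = P) (hPC : ⁅P, C⁆ = -K) (hKC : ⁅K, C⁆ = 0) (hPH : ⁅P, H⁆ = 0)
    (hM : ∀ X : L, ⁅M, X⁆ = 0)
    (r : L ⊗[ℝ] L) (hrs : r ∈ skewPart L) (hbi : IsBialgCocomm L (cobdry L r))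
    (al xi nu be1 be2 be3 be4 be5 be6 : ℝ)
    (hdK : cobdry L r K = be6 • wedge L K P + xi • wedge L K M + nu • wedge L P H +
      be1 • wedge L P M + be2 • wedge L H M)
    (hdH : cobdry L r H = be5 • wedge L K M - (be6 + al) • wedge L P H +
      be3 • wedge L P M + (be4 - xi) • wedge L H M)
    (hdP : cobdry L r P = be4 • wedge L P M + (be6 + al) • wedge L H M) :
    al = 0 ∧ nu = 0 ∧ be5 = 0 ∧ be6 = 0 ∧ be2*(2*be4 - xi) = 0 := by
  obtain ⟨a1, a2, a3, a4, a5, a6, b1, b2, b3, b4, b5, b6, c1, c2, c3, hr⟩ := exists_eq_rGen hB hrs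
  obtain ⟨rfl, rfl, rfl, hr⟩ := eq_rGen_of_cobdry_K_H hB hDK hKP hDH hHC hKH hKC hPH hM hr hdK hdH
  have hcj := hbi.2.2
  have hdM₀ : cobdry L r M = 0 := cobdry_eq_zero_of_forall_lie_eq_zero r hM
  have hbe6 : be6 = 0 := by simpa using coJacobi_at_K hB hcj hdK hdH hdP hdM₀
  subst hbe6
  have hdC := cobdry_rGen_C hDC hHC hPC hKC hM a3 be1 (-be2) (-be3) 0 ((be4 - xi) / 2)
    (-((be4 + xi) / 2))
  have hdD := cobdry_rGen_D (C := C) hDP hDK hDH hM a3 be1 (-be2) (-be3) 0 ((be4 - xi) / 2)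
    (-((be4 + xi) / 2))
  rw [← hr] at hdC hdD
  have hC := coJacobi_at_C hB hcj hdK hdH hdP hdM₀ (by rw [hdC]; module) (by rw [hdD]; module)
  exact ⟨rfl, rfl, rfl, rfl, by linarith⟩

theorem statement15 (L : Type) [LieRing L] [LieAlgebra ℝ L]
    (D H P K C M : L) (B : Module.Basis (Fin 6) ℝ L)
    (hB : ⇑B = ![D, H, P, K, C, M])
    (hDP : ⁅D, P⁆ = -P) (hDK : ⁅D, K⁆ = K) (hKP : ⁅K, P⁆ = M)
    (hDH : ⁅D, H⁆ = (-2 : ℝ) • H) (hDC : ⁅D, C⁆ = (2 : ℝ) • C) (hHC : ⁅H, C⁆ = D)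
    (hKH : ⁅K, H⁆ = P) (hPC : ⁅P, C⁆ = -K) (hKC : ⁅K, C⁆ = 0) (hPH : ⁅P, H⁆ = 0)
    (hM : ∀ X : L, ⁅M, X⁆ = 0)
    (r : L ⊗[ℝ] L) (hrs : r ∈ skewPart L) (hbi : IsBialgCocomm L (cobdry L r))
    (al xi nu be1 be2 be3 be4 be5 be6 : ℝ)
    (hdK : cobdry L r K = be6 • wedge L K P + xi • wedge L K M + nu • wedge L P H +
      be1 • wedge L P M + be2 • wedge L H M)
    (hdH : cobdry L r H = be5 • wedge L K M - (be6 + al) • wedge L P H +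
      be3 • wedge L P M + (be4 - xi) • wedge L H M)
    (hdP : cobdry L r P = be4 • wedge L P M + (be6 + al) • wedge L H M)
    (hdM : cobdry L r M = al • wedge L P M) :
    al = 0 ∧ nu = 0 ∧ be5 = 0 ∧ be6 = 0 ∧ be2*(2*be4 - xi) = 0 :=
  statement15_general L D H P K C M B hB hDP hDK hKP hDH hDC hHC hKH hPC hKC hPH hM r hrs hbi al xi
    nu be1 be2 be3 be4 be5 be6 hdK hdH hdP
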